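/- Let K be a field and let E_1, E_2 be finite-dimensional K-vector spaces equipped with weight functions w_1, w_2 respectively. Then there exists a weight function w on the tensor product E_1 ⊗_K E_2 such that w(e_1 ⊗ e_2) = w_1(e_1) + w_2(e_2) for all e_1 ∈ E_1 and e_2 ∈ E_2 (with the convention that a sum involving −∞ equals −∞). -/

import Mathlib

/-!
A weight function `w` on a finite-dimensional space has an adapted basis `b`: the weight of
every vector is the largest weight `w (b i)` over the basis vectors in its support. One is
obtained by induction on the dimension: the vectors of weight below the maximal value form a
proper subspace `V`, every vector outside `V` has maximal weight, so an adapted basis of `V`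
extended by any basis of a complement is adapted.

Given adapted bases `b₁, b₂`, give `b₁ i ⊗ b₂ j` the weight `w₁ (b₁ i) + w₂ (b₂ j)` and weigh
a tensor by the maximum over its support in the product basis. The support of `e₁ ⊗ e₂` is
the product of the supports of `e₁` and `e₂`, and a maximum of sums over a product is the sum
of the maxima.
-/

/-- A weight function on a `K`-vector space `E` is a map `w : E → ℝ ∪ {−∞}` such that
(1) `w x = −∞` iff `x = 0`; (2) `w (t • x) = w x` for all nonzero `t : K`;
(3) `w (x + y) ≤ max (w x) (w y)`. -/
def IsWeightFunction (K : Type*) [Field K] {E : Type*} [AddCommGroup E] [Module K E]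
    (w : E → WithBot ℝ) : Prop :=
  (∀ x : E, w x = ⊥ ↔ x = 0) ∧
  (∀ (t : K) (x : E), t ≠ 0 → w (t • x) = w x) ∧
  (∀ x y : E, w (x + y) ≤ max (w x) (w y))

open Module TensorProduct

theorem Finset.sup_add_sup_withBot {α ι κ : Type*} [AddCommMonoid α] [LinearOrder α]
    [IsOrderedAddMonoid α] (s : Finset ι) (t : Finset κ)
    (f : ι → WithBot α) (g : κ → WithBot α) :
    s.sup f + t.sup g = (s ×ˢ t).sup fun ij ↦ f ij.1 + g ij.2 := by
  rcases s.eq_empty_or_nonempty with rfl | hs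
  · simp
  rcases t.eq_empty_or_nonempty with rfl | ht
  · simp
  obtain ⟨i, hi, hf⟩ := s.exists_mem_eq_sup hs f
  obtain ⟨j, hj, hg⟩ := t.exists_mem_eq_sup ht g
  refine le_antisymm ?_ (Finset.sup_le fun ij hij ↦ ?_)
  · rw [hf, hg]
    exact Finset.le_sup (f := fun ij ↦ f ij.1 + g ij.2) (Finset.mk_mem_product hi hj)
  · rw [Finset.mem_product] at hij
    exact add_le_add (Finset.le_sup hij.1) (Finset.le_sup hij.2)

namespace IsWeightFunction

variable {K E : Type*} [Field K] [AddCommGroup E] [Module K E] {w : E → WithBot ℝ}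

theorem map_zero (hw : IsWeightFunction K w) : w 0 = ⊥ := (hw.1 0).mpr rfl

theorem map_sum_le (hw : IsWeightFunction K w) {α : Type*} (s : Finset α) (g : α → E) :
    w (∑ a ∈ s, g a) ≤ s.sup (w ∘ g) := by
  induction s using Finset.cons_induction with
  | empty => simp [hw.map_zero]
  | cons a s _ ih =>
    rw [Finset.sum_cons, Finset.sup_cons]
    exact (hw.2.2 _ _).trans (max_le_max le_rfl ih)

theorem comp_injective {F : Type*} [AddCommGroup F] [Module K F] (hw : IsWeightFunction K w)
    {f : F →ₗ[K] E} (hf : Function.Injective f) : IsWeightFunction K (w ∘ f) :=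
  ⟨fun x ↦ (hw.1 (f x)).trans (injective_iff_map_eq_zero' f |>.mp hf x),
    fun t x ht ↦ by simp only [Function.comp_apply, map_smul, hw.2.1 t _ ht],
    fun x y ↦ by simp only [Function.comp_apply, map_add, hw.2.2]⟩

def sublevel (hw : IsWeightFunction K w) (c : WithBot ℝ) : Submodule K E where
  carrier := {x | w x ≤ c}
  zero_mem' := by simp [hw.map_zero]
  add_mem' hx hy := (hw.2.2 _ _).trans (max_le hx hy)
  smul_mem' t x hx := by
    rcases eq_or_ne t 0 with rfl | ht
    · simp [hw.map_zero]
    · simpa [hw.2.1 t x ht] using hx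

def strictSublevel (hw : IsWeightFunction K w) {c : WithBot ℝ} (hc : ⊥ < c) :
    Submodule K E where
  carrier := {x | w x < c}
  zero_mem' := by simpa [hw.map_zero] using hc
  add_mem' hx hy := (hw.2.2 _ _).trans_lt (max_lt hx hy)
  smul_mem' t x hx := by
    rcases eq_or_ne t 0 with rfl | ht
    · simpa [hw.map_zero] using hc
    · simpa [hw.2.1 t x ht] using hx

theorem finite_range [FiniteDimensional K E] (hw : IsWeightFunction K w) :
    (Set.range w).Finite := by
  have hmono : StrictMonoOn (fun c ↦ finrank K (hw.sublevel c)) (Set.range w) := by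
    rintro c - _ ⟨x, rfl⟩ hc
    refine Submodule.finrank_lt_finrank_of_lt (SetLike.lt_iff_le_and_exists.mpr
      ⟨fun y hy ↦ hy.trans hc.le, x, show w x ≤ w x from le_rfl, not_le.mpr hc⟩)
  refine Set.Finite.of_finite_image ?_ hmono.injOn
  refine (Set.finite_Iic (finrank K E)).subset ?_
  rintro _ ⟨c, -, rfl⟩
  exact Submodule.finrank_le _

theorem exists_forall_le [FiniteDimensional K E] (hw : IsWeightFunction K w) :
    ∃ x, ∀ y, w y ≤ w x := by
  obtain ⟨-, ⟨x, rfl⟩, hx⟩ := Set.exists_max_image _ id hw.finite_range (Set.range_nonempty w)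
  exact ⟨x, fun y ↦ hx _ ⟨y, rfl⟩⟩

end IsWeightFunction

namespace Module.Basis

variable {K E ι : Type*} [Field K] [AddCommGroup E] [Module K E]

noncomputable def maxWeight (b : Basis ι K E) (f : ι → WithBot ℝ) (x : E) : WithBot ℝ :=
  (b.repr x).support.sup f

theorem isWeightFunction_maxWeight (b : Basis ι K E) {f : ι → WithBot ℝ} (hf : ∀ i, f i ≠ ⊥) :
    IsWeightFunction K (b.maxWeight f) := by
  classical
  refine ⟨fun x ↦ ?_, fun t x ht ↦ ?_, fun x y ↦ ?_⟩
  · simp only [maxWeight, Finset.sup_eq_bot_iff, Finsupp.mem_support_iff]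
    refine ⟨fun h ↦ b.repr.map_eq_zero_iff.mp (Finsupp.ext fun i ↦ ?_), ?_⟩
    · by_contra hi
      exact hf i (h i hi)
    · rintro rfl i hi
      simp at hi
  · rw [maxWeight, map_smul, Finsupp.support_smul_eq ht, maxWeight]
  · rw [maxWeight, maxWeight, maxWeight, ← Finset.sup_union]
    exact Finset.sup_mono (map_add b.repr x y ▸ Finsupp.support_add)

theorem maxWeight_tensorProduct_tmul {E' κ : Type*} [AddCommGroup E'] [Module K E']
    (b : Basis ι K E) (b' : Basis κ K E') (f : ι → WithBot ℝ) (g : κ → WithBot ℝ)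
    (x : E) (y : E') :
    (b.tensorProduct b').maxWeight (fun ij ↦ f ij.1 + g ij.2) (x ⊗ₜ y) =
      b.maxWeight f x + b'.maxWeight g y := by
  have hsupp : ((b.tensorProduct b').repr (x ⊗ₜ y)).support =
      (b.repr x).support ×ˢ (b'.repr y).support := by
    ext ⟨i, j⟩
    simp [and_comm]
  rw [maxWeight, hsupp, maxWeight, maxWeight, Finset.sup_add_sup_withBot]

end Module.Basis

namespace IsWeightFunction

universe u

variable {K : Type*} {E : Type u} [Field K] [AddCommGroup E] [Module K E] {w : E → WithBot ℝ}

theorem le_maxWeight (hw : IsWeightFunction K w) {ι : Type*} (b : Basis ι K E) (x : E) :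
    w x ≤ b.maxWeight (w ∘ b) x := by
  conv_lhs => rw [← b.linearCombination_repr x, Finsupp.linearCombination_apply, Finsupp.sum]
  refine (hw.map_sum_le _ _).trans (Finset.sup_le fun i hi ↦ ?_)
  rw [Function.comp_apply, hw.2.1 _ _ (Finsupp.mem_support_iff.mp hi)]
  exact Finset.le_sup (f := w ∘ b) hi

theorem maxWeight_eq_iff (hw : IsWeightFunction K w) {ι : Type*} (b : Basis ι K E) :
    b.maxWeight (w ∘ b) = w ↔ ∀ x i, b.repr x i ≠ 0 → w (b i) ≤ w x := by
  refine ⟨fun h x i hi ↦ ?_, fun h ↦ funext fun x ↦ le_antisymm ?_ (hw.le_maxWeight b x)⟩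
  · rw [← congrFun h x]
    exact Finset.le_sup (f := w ∘ b) (Finsupp.mem_support_iff.mpr hi)
  · exact Finset.sup_le fun i hi ↦ h x i (Finsupp.mem_support_iff.mp hi)

theorem exists_basis_maxWeight_eq_of_isCompl (hw : IsWeightFunction K w)
    {V W : Submodule K E} (hVW : IsCompl V W) (hV : ∀ x ∉ V, ∀ y, w y ≤ w x)
    {ι κ : Type*} (b : Basis ι K V) (hb : b.maxWeight (w ∘ V.subtype ∘ b) = w ∘ V.subtype)
    (b' : Basis κ K W) : ∃ B : Basis (ι ⊕ κ) K E, B.maxWeight (w ∘ B) = w := by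
  let B := (b.prod b').map (V.prodEquivOfIsCompl W hVW)
  refine ⟨B, (hw.maxWeight_eq_iff B).mpr fun x i hi ↦ ?_⟩
  by_cases hx : x ∈ V
  · have hxB : B.repr x = (b.prod b').repr (⟨x, hx⟩, 0) := by
      simp only [B, Basis.map_repr, LinearEquiv.trans_apply]
      congr 1
      exact V.prodEquivOfIsCompl_symm_apply_left W hVW ⟨x, hx⟩
    rcases i with j | j
    · rw [hxB, Basis.prod_repr_inl] at hi
      have hBj : B (.inl j) = b j := by simp [B]
      rw [hBj]
      exact ((hw.comp_injective V.injective_subtype).maxWeight_eq_iff b).mp hb ⟨x, hx⟩ j hi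
    · rw [hxB, Basis.prod_repr_inr] at hi
      simp at hi
  · exact hV x hx _

theorem exists_basis_maxWeight_eq [FiniteDimensional K E] (hw : IsWeightFunction K w) :
    ∃ (ι : Type u) (b : Basis ι K E), b.maxWeight (w ∘ b) = w := by
  induction hn : finrank K E using Nat.strong_induction_on generalizing E with
  | _ n ih =>
  rcases subsingleton_or_nontrivial E with hE | hE
  · refine ⟨PEmpty, Basis.empty E, funext fun x ↦ ?_⟩
    simp [Subsingleton.elim x 0, Basis.maxWeight, hw.map_zero]
  obtain ⟨x₁, hx₁⟩ := hw.exists_forall_le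
  obtain ⟨y, hy⟩ := exists_ne (0 : E)
  have hbot : ⊥ < w x₁ := (bot_lt_iff_ne_bot.mpr (mt (hw.1 y).mp hy)).trans_le (hx₁ y)
  set V := hw.strictSublevel hbot
  have hV : ∀ x ∉ V, ∀ y, w y ≤ w x := fun x hx y ↦ (hx₁ y).trans (not_lt.mp hx)
  have hVE : finrank K V < n := hn ▸ Submodule.finrank_lt (fun h ↦ lt_irrefl (w x₁) <|
    show x₁ ∈ V from h ▸ Submodule.mem_top)
  obtain ⟨ι, b, hb⟩ := ih _ hVE (hw.comp_injective V.injective_subtype) rfl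
  obtain ⟨W, hVW⟩ := V.exists_isCompl
  exact ⟨_, hw.exists_basis_maxWeight_eq_of_isCompl hVW hV b hb (finBasis K W)⟩

end IsWeightFunction

open TensorProduct in
/-- If `w₁, w₂` are weight functions on finite-dimensional spaces `E₁, E₂`, then there
is a weight function `w` on `E₁ ⊗ E₂` with `w (e₁ ⊗ e₂) = w₁ e₁ + w₂ e₂` on pure
tensors (in `ℝ ∪ {−∞}`, where a sum involving `−∞` is `−∞`). -/
theorem tensor_product_weight_function (K : Type*) [Field K] (E₁ E₂ : Type*)
    [AddCommGroup E₁] [Module K E₁] [AddCommGroup E₂] [Module K E₂]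
    [FiniteDimensional K E₁] [FiniteDimensional K E₂]
    (w₁ : E₁ → WithBot ℝ) (w₂ : E₂ → WithBot ℝ)
    (hw₁ : IsWeightFunction K w₁) (hw₂ : IsWeightFunction K w₂) :
    ∃ w : E₁ ⊗[K] E₂ → WithBot ℝ, IsWeightFunction K w ∧
      ∀ (e₁ : E₁) (e₂ : E₂), w (e₁ ⊗ₜ[K] e₂) = w₁ e₁ + w₂ e₂ := by
  obtain ⟨ι₁, b₁, hb₁⟩ := hw₁.exists_basis_maxWeight_eq
  obtain ⟨ι₂, b₂, hb₂⟩ := hw₂.exists_basis_maxWeight_eq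
  have hne : ∀ ij : ι₁ × ι₂, w₁ (b₁ ij.1) + w₂ (b₂ ij.2) ≠ ⊥ := fun ij ↦ by
    simp [WithBot.add_eq_bot, hw₁.1, hw₂.1, b₁.ne_zero, b₂.ne_zero]
  refine ⟨_, (b₁.tensorProduct b₂).isWeightFunction_maxWeight hne, fun e₁ e₂ ↦ ?_⟩
  exact (b₁.maxWeight_tensorProduct_tmul b₂ (w₁ ∘ b₁) (w₂ ∘ b₂) e₁ e₂).trans (by rw [hb₁, hb₂])
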